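/- arXiv:2206.03768 — 2 statements merged into one kernel-verified Lean document; each statement's English description precedes it below -/
import Mathlib

section
/- Suppose A g̃ = c̃ ũ_A and B g̃ = s̃ ũ_B with c̃² + s̃² = 1. Then the combined residual norm satisfies √(‖s̃² Aᵀũ_A − c̃ BᵀB g̃‖² + ‖c̃² Bᵀũ_B − s̃ AᵀA g̃‖²) = ‖s̃ Aᵀũ_A − c̃ Bᵀũ_B‖. -/
open Matrix

/-- The combined GSVD residual norm equals ‖s̃ Aᵀũ_A − c̃ Bᵀũ_B‖. -/
theorem gsvd_combined_residual_norm {m p n : ℕ}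
    (A : Matrix (Fin m) (Fin n) ℝ) (B : Matrix (Fin p) (Fin n) ℝ)
    (g : Fin n → ℝ) (uA : Fin m → ℝ) (uB : Fin p → ℝ) (c s : ℝ)
    (hcs : c ^ 2 + s ^ 2 = 1)
    (hA : A *ᵥ g = c • uA) (hB : B *ᵥ g = s • uB) :
    let r₁ := s ^ 2 • (Aᵀ *ᵥ uA) - c • (Bᵀ *ᵥ (B *ᵥ g))
    let r₂ := c ^ 2 • (Bᵀ *ᵥ uB) - s • (Aᵀ *ᵥ (A *ᵥ g))
    let r₃ := s • (Aᵀ *ᵥ uA) - c • (Bᵀ *ᵥ uB)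
    Real.sqrt (r₁ ⬝ᵥ r₁ + r₂ ⬝ᵥ r₂) = Real.sqrt (r₃ ⬝ᵥ r₃) := by
  intro r₁ r₂ r₃
  have h1 : r₁ = s • r₃ := by
    simp only [r₁, r₃, hB, mulVec_smul, smul_sub, smul_smul, pow_two]
    module
  have h2 : r₂ = (-c) • r₃ := by
    simp only [r₂, r₃, hA, mulVec_smul, smul_sub, smul_smul, pow_two]
    module
  rw [h1, h2]
  congr 1
  simp only [smul_dotProduct, dotProduct_smul, smul_eq_mul]
  linear_combination (r₃ ⬝ᵥ r₃) * hcs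
end

section
/- Let 1 = c₁² > c₂² > ... > cₙ² ≥ 0 be replaced by general values c₁ > c₂ ≥ cₙ in [0,1] with c₁² > c₂² > cₙ², and for γ > 0 define ω_i⁻² = c_i² + γ²(1 − c_i²) and c_i' = ω_i c_i. Then the ratio of relative gaps ρ'₁/ρ₁ := ((c'₁² − c'₂²)(c₂² − cₙ²)) / ((c'₂² − c'ₙ²)(c₁² − c₂²)) equals (cₙ² + γ²(1 − cₙ²)) / (c₁² + γ²(1 − c₁²)) = ω₁²/ωₙ². -/
/-!
Write `s = c²`, `g = γ²` and `w(s) = s + g(1 - s) = ω⁻²`, so that `c'² = s / w(s)`. The map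
`s ↦ s / w(s)` is a Möbius transformation whose differences factor as
`s/w(s) - t/w(t) = g (s - t) / (w(s) w(t))`; in the ratio of relative gaps the factors `g`,
`s₁ - s₂`, `s₂ - sₙ` and `w(s₂)` cancel, leaving `w(sₙ) / w(s₁)`.
-/

lemma add_mul_one_sub_pos {g s : ℝ} (hg : 0 < g) (hs₀ : 0 ≤ s) (hs₁ : s ≤ 1) :
    0 < s + g * (1 - s) := by
  rcases hs₁.lt_or_eq with hs | rfl
  · nlinarith
  · norm_num

lemma div_add_mul_one_sub_sub_div {g s t : ℝ} (hs : s + g * (1 - s) ≠ 0)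
    (ht : t + g * (1 - t) ≠ 0) :
    s / (s + g * (1 - s)) - t / (t + g * (1 - t)) =
      g * (s - t) / ((s + g * (1 - s)) * (t + g * (1 - t))) := by
  field_simp
  ring

lemma relative_gap_ratio_div_add_mul_one_sub {g s₁ s₂ sₙ : ℝ} (hg : g ≠ 0)
    (h₁ : s₁ + g * (1 - s₁) ≠ 0) (h₂ : s₂ + g * (1 - s₂) ≠ 0) (hₙ : sₙ + g * (1 - sₙ) ≠ 0)
    (h₁₂ : s₁ - s₂ ≠ 0) (h₂ₙ : s₂ - sₙ ≠ 0) :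
    ((s₁ / (s₁ + g * (1 - s₁)) - s₂ / (s₂ + g * (1 - s₂))) * (s₂ - sₙ)) /
        ((s₂ / (s₂ + g * (1 - s₂)) - sₙ / (sₙ + g * (1 - sₙ))) * (s₁ - s₂)) =
      (sₙ + g * (1 - sₙ)) / (s₁ + g * (1 - s₁)) := by
  rw [div_add_mul_one_sub_sub_div h₁ h₂, div_add_mul_one_sub_sub_div h₂ hₙ]
  field_simp

/-- The ratio of relative gaps after scaling equals
(cₙ² + γ²(1−cₙ²))/(c₁² + γ²(1−c₁²)) = ω₁²/ωₙ². -/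
theorem scaled_relative_gap_ratio (c1 c2 cn γ : ℝ)
    (h1 : c1 ∈ Set.Icc (0 : ℝ) 1) (h2 : c2 ∈ Set.Icc (0 : ℝ) 1)
    (hn : cn ∈ Set.Icc (0 : ℝ) 1)
    (h12 : c2 ^ 2 < c1 ^ 2) (h2n : cn ^ 2 < c2 ^ 2) (hγ : 0 < γ) :
    let ω : ℝ → ℝ := fun c => (Real.sqrt (c ^ 2 + γ ^ 2 * (1 - c ^ 2)))⁻¹
    let c' : ℝ → ℝ := fun c => ω c * c
    ((c' c1 ^ 2 - c' c2 ^ 2) * (c2 ^ 2 - cn ^ 2)) /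
        ((c' c2 ^ 2 - c' cn ^ 2) * (c1 ^ 2 - c2 ^ 2)) =
      (cn ^ 2 + γ ^ 2 * (1 - cn ^ 2)) / (c1 ^ 2 + γ ^ 2 * (1 - c1 ^ 2)) ∧
    (cn ^ 2 + γ ^ 2 * (1 - cn ^ 2)) / (c1 ^ 2 + γ ^ 2 * (1 - c1 ^ 2)) =
      ω c1 ^ 2 / ω cn ^ 2 := by
  intro ω c'
  have hw : ∀ c ∈ Set.Icc (0 : ℝ) 1, 0 < c ^ 2 + γ ^ 2 * (1 - c ^ 2) := fun c hc =>
    add_mul_one_sub_pos (by positivity) (sq_nonneg c) (pow_le_one₀ hc.1 hc.2)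
  have hω : ∀ c ∈ Set.Icc (0 : ℝ) 1, ω c ^ 2 = (c ^ 2 + γ ^ 2 * (1 - c ^ 2))⁻¹ := by
    intro c hc
    simp only [ω, inv_pow, Real.sq_sqrt (hw c hc).le]
  have hc' : ∀ c ∈ Set.Icc (0 : ℝ) 1, c' c ^ 2 = c ^ 2 / (c ^ 2 + γ ^ 2 * (1 - c ^ 2)) := by
    intro c hc
    simp only [c', mul_pow, hω c hc, inv_mul_eq_div]
  constructor
  · rw [hc' c1 h1, hc' c2 h2, hc' cn hn]
    exact relative_gap_ratio_div_add_mul_one_sub (by positivity) (hw c1 h1).ne'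
      (hw c2 h2).ne' (hw cn hn).ne' (sub_ne_zero.2 h12.ne') (sub_ne_zero.2 h2n.ne')
  · rw [hω c1 h1, hω cn hn, inv_div_inv]
end
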